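/- Any positive solution of u'' + λ u(1-u) - μ = 0 on (-1,1) with u(±1) = 0, λ > 0, μ > 0, satisfies 0 < u(x) < 1 for all x ∈ (-1,1). -/

import Mathlib

open Set Filter Topology

/-! If `u ≥ 1` somewhere inside, `u` attains a maximum `u x₀ ≥ 1` at an interior point, where the
equation gives `u'' = μ - λ u (1 - u) ≥ μ > 0`; but `u'' ≤ 0` at any maximum. -/

/-- If the second derivative were positive, the second-derivative test would make `x` also a local
minimum, so `f` would be constant near `x`. -/
theorem IsLocalMax.deriv_deriv_nonpos {f : ℝ → ℝ} {x : ℝ} (hmax : IsLocalMax f x)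
    (hc : ContinuousAt f x) : deriv (deriv f) x ≤ 0 := by
  by_contra! hpos
  have hmin : IsLocalMin f x := isLocalMin_of_deriv_deriv_pos hpos hmax.deriv_eq_zero hc
  have hconst : f =ᶠ[𝓝 x] fun _ => f x := (hmin.and hmax).mono fun y hy => le_antisymm hy.2 hy.1
  have hderiv : deriv f =ᶠ[𝓝 x] fun _ => 0 :=
    hconst.eventuallyEq_nhds.mono fun y hy => by rw [hy.deriv_eq, deriv_const]
  rw [hderiv.deriv_eq, deriv_const] at hpos
  exact lt_irrefl _ hpos

theorem lt_of_deriv_deriv_pos_of_le {f : ℝ → ℝ} {a b c : ℝ} (hf : ContinuousOn f (Icc a b))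
    (ha : f a < c) (hb : f b < c) (hconvex : ∀ x ∈ Ioo a b, c ≤ f x → 0 < deriv (deriv f) x) :
    ∀ x ∈ Ioo a b, f x < c := by
  by_contra! ⟨z, hz, hcz⟩
  obtain ⟨x₀, hx₀, hmax⟩ := isCompact_Icc.exists_isMaxOn ⟨z, Ioo_subset_Icc_self hz⟩ hf
  have hcx₀ : c ≤ f x₀ := hcz.trans (hmax (Ioo_subset_Icc_self hz))
  have hx₀' : x₀ ∈ Ioo a b := by
    refine ⟨hx₀.1.lt_of_ne ?_, hx₀.2.lt_of_ne ?_⟩ <;> rintro rfl <;> linarith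
  have hnhds : Icc a b ∈ 𝓝 x₀ := Icc_mem_nhds hx₀'.1 hx₀'.2
  have hnonpos := (hmax.isLocalMax hnhds).deriv_deriv_nonpos (hf.continuousAt hnhds)
  linarith [hconvex x₀ hx₀' hcx₀]

theorem logistic_solution_below_one_general
    (lam mu : ℝ) (u : ℝ → ℝ)
    (hlam : 0 < lam) (hmu : 0 < mu)
    (hu : ContDiffOn ℝ 2 u (Icc (-1) 1))
    (hueq : ∀ x ∈ Ioo (-1:ℝ) 1,
      deriv (deriv u) x + lam * u x * (1 - u x) - mu = 0)
    (hubc1 : u (-1) = 0) (hubc2 : u 1 = 0) :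
    ∀ x ∈ Ioo (-1:ℝ) 1, u x < 1 := by
  refine lt_of_deriv_deriv_pos_of_le hu.continuousOn (by linarith) (by linarith) fun x hx hx1 => ?_
  have hreaction : lam * u x * (1 - u x) ≤ 0 :=
    mul_nonpos_of_nonneg_of_nonpos (mul_nonneg hlam.le (by linarith)) (by linarith)
  linarith [hueq x hx]

theorem logistic_solution_below_one
    (lam mu : ℝ) (u : ℝ → ℝ)
    (hlam : 0 < lam) (hmu : 0 < mu)
    (hu : ContDiffOn ℝ 2 u (Icc (-1) 1))
    (hupos : ∀ x ∈ Ioo (-1:ℝ) 1, 0 < u x)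
    (hueq : ∀ x ∈ Ioo (-1:ℝ) 1,
      deriv (deriv u) x + lam * u x * (1 - u x) - mu = 0)
    (hubc1 : u (-1) = 0) (hubc2 : u 1 = 0) :
    ∀ x ∈ Ioo (-1:ℝ) 1, u x < 1 :=
  logistic_solution_below_one_general lam mu u hlam hmu hu hueq hubc1 hubc2
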